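/- Let b > 0, 0 ≤ ρ < 1, and z ≥ 0. Then ∫₀^z (1−ρ) b ∑_{k=0}^∞ ((2k+1)!/(k!)²) (ρ b)ᵏ xᵏ / (x+b)^{2k+2} dx = (1−ρ) b ∑_{k=0}^∞ ((2k+1)!/(k!)²) (ρ b)ᵏ ∑_{i=0}^k C(k,i) (−b)^{k−i} / (i−2k−1) · ((z+b)^{i−2k−1} − b^{i−2k−1}), where the series on both sides converge. -/

import Mathlib

/-!
On `x ≥ 0` the `k`-th term of the density series is at most `(2k+1) ρᵏ / b²`: use
`(2k+1)!/(k!)² = (2k+1) C(2k,k) ≤ (2k+1) 4ᵏ` and `4bx ≤ (x+b)²`. This bound is summable and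
independent of `x`, so dominated convergence lets us integrate termwise. Each term integrates in
closed form after writing `xᵏ = ((x+b) - b)ᵏ` and expanding binomially, which turns
`xᵏ/(x+b)^(2k+2)` into a combination of the powers `(x+b)^(i-2k-2)`, `0 ≤ i ≤ k`.
-/

open MeasureTheory Finset

theorem sum_choose_mul_neg_pow_mul_zpow_sub {K : Type*} [Field K] {y : K} (hy : y ≠ 0) (b : K)
    (k : ℕ) (m : ℤ) :
    ∑ i ∈ range (k + 1), (k.choose i : K) * (-b) ^ (k - i) * y ^ ((i : ℤ) - m) =
      (y - b) ^ k / y ^ m := by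
  simp_rw [zpow_sub₀ hy, zpow_natCast, sub_eq_add_neg y b, add_pow, sum_div]
  exact sum_congr rfl fun i _ => by ring

theorem hasDerivAt_div_mul_add_zpow (c b x : ℝ) {n : ℤ} (hn : n ≠ 0) (hx : x + b ≠ 0) :
    HasDerivAt (fun y => c / n * (y + b) ^ n) (c * (x + b) ^ (n - 1)) x := by
  have h := ((hasDerivAt_zpow n (x + b) (Or.inl hx)).comp_add_const x b).const_mul (c / n)
  refine h.congr_deriv ?_
  field_simp

theorem hasDerivAt_sum_choose_zpow {b x : ℝ} (k : ℕ) (hx : x + b ≠ 0) :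
    HasDerivAt (fun y => ∑ i ∈ range (k + 1),
        (k.choose i : ℝ) * (-b) ^ (k - i) / ((i : ℝ) - 2 * k - 1) *
          (y + b) ^ ((i : ℤ) - 2 * k - 1))
      (x ^ k / (x + b) ^ (2 * k + 2)) x := by
  have hterm : ∀ i ∈ range (k + 1), HasDerivAt
      (fun y => (k.choose i : ℝ) * (-b) ^ (k - i) / ((i : ℝ) - 2 * k - 1) *
        (y + b) ^ ((i : ℤ) - 2 * k - 1))
      ((k.choose i : ℝ) * (-b) ^ (k - i) * (x + b) ^ ((i : ℤ) - (2 * k + 2 : ℕ))) x := by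
    intro i hi
    have hik : i ≤ k := Nat.lt_succ_iff.mp (mem_range.mp hi)
    have h := hasDerivAt_div_mul_add_zpow ((k.choose i : ℝ) * (-b) ^ (k - i)) b x
      (n := (i : ℤ) - 2 * k - 1) (by omega) hx
    push_cast at h
    convert h using 3
    push_cast
    ring
  refine (HasDerivAt.fun_sum hterm).congr_deriv ?_
  rw [sum_choose_mul_neg_pow_mul_zpow_sub hx, add_sub_cancel_right, zpow_natCast]

theorem integral_pow_div_add_pow {b z : ℝ} (hb : -b ∉ Set.uIcc 0 z) (k : ℕ) :
    ∫ x in (0 : ℝ)..z, x ^ k / (x + b) ^ (2 * k + 2) =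
      ∑ i ∈ range (k + 1), (k.choose i : ℝ) * (-b) ^ (k - i) / ((i : ℝ) - 2 * k - 1) *
        ((z + b) ^ ((i : ℤ) - 2 * k - 1) - b ^ ((i : ℤ) - 2 * k - 1)) := by
  have hne : ∀ x ∈ Set.uIcc 0 z, x + b ≠ 0 := fun x hx hxb =>
    hb (eq_neg_of_add_eq_zero_left hxb ▸ hx)
  rw [intervalIntegral.integral_eq_sub_of_hasDerivAt
    (fun x hx => hasDerivAt_sum_choose_zpow k (hne x hx))
    ((continuousOn_pow k).div (by fun_prop) fun x hx =>
      pow_ne_zero _ (hne x hx)).intervalIntegrable]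
  simp only [zero_add, ← sum_sub_distrib, mul_sub]

/-- The `k`-th term of the series for the density of the eavesdropper's asymptotic SINR, without
the common factor `(1 - ρ) b`. -/
noncomputable def sinrDensityTerm (ρ b : ℝ) (k : ℕ) (x : ℝ) : ℝ :=
  (Nat.factorial (2 * k + 1) : ℝ) / (Nat.factorial k : ℝ) ^ 2 * (ρ * b) ^ k * x ^ k /
    (x + b) ^ (2 * k + 2)

theorem factorial_two_mul_add_one_div_sq_le (k : ℕ) :
    (Nat.factorial (2 * k + 1) : ℝ) / (Nat.factorial k : ℝ) ^ 2 ≤ (2 * k + 1) * 4 ^ k := by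
  have hcentral : ((2 * k).factorial : ℝ) = k.centralBinom * (k.factorial : ℝ) ^ 2 := by
    rw [Nat.centralBinom_eq_two_mul_choose, two_mul, ← Nat.add_choose_mul_factorial_mul_factorial]
    push_cast
    ring
  have hcoeff : (Nat.factorial (2 * k + 1) : ℝ) / (Nat.factorial k : ℝ) ^ 2 =
      (2 * k + 1) * k.centralBinom := by
    rw [Nat.factorial_succ, Nat.cast_mul, hcentral]
    field_simp
    push_cast
    ring
  rw [hcoeff]
  gcongr
  exact_mod_cast Nat.centralBinom_le_four_pow k

section DensityTerm

variable {ρ b : ℝ}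

theorem sinrDensityTerm_nonneg (hρ : 0 ≤ ρ) (hb : 0 ≤ b) (k : ℕ) {x : ℝ} (hx : 0 ≤ x) :
    0 ≤ sinrDensityTerm ρ b k x := by
  unfold sinrDensityTerm
  positivity

theorem sinrDensityTerm_le (hρ : 0 ≤ ρ) (hb : 0 < b) (k : ℕ) {x : ℝ} (hx : 0 ≤ x) :
    sinrDensityTerm ρ b k x ≤ (2 * k + 1) * ρ ^ k / b ^ 2 := by
  have hxb : 0 < x + b := by linarith
  have hamgm : 4 ^ k * ((ρ * b) ^ k * x ^ k) ≤ ρ ^ k * (x + b) ^ (2 * k) := by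
    rw [← mul_pow, ← mul_pow, pow_mul, ← mul_pow]
    apply pow_le_pow_left₀ (by positivity)
    nlinarith [mul_nonneg hρ (sq_nonneg (x - b))]
  calc sinrDensityTerm ρ b k x
      = (Nat.factorial (2 * k + 1) : ℝ) / (Nat.factorial k : ℝ) ^ 2 * ((ρ * b) ^ k * x ^ k) /
          (x + b) ^ (2 * k + 2) := by
        unfold sinrDensityTerm
        ring
    _ ≤ (2 * k + 1) * 4 ^ k * ((ρ * b) ^ k * x ^ k) / (x + b) ^ (2 * k + 2) := by
        gcongr
        exact factorial_two_mul_add_one_div_sq_le k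
    _ ≤ (2 * k + 1) * (ρ ^ k * (x + b) ^ (2 * k)) / ((x + b) ^ (2 * k) * (x + b) ^ 2) := by
        rw [mul_assoc, ← pow_add]
        gcongr
    _ = (2 * k + 1) * ρ ^ k / (x + b) ^ 2 := by
        field_simp
    _ ≤ (2 * k + 1) * ρ ^ k / b ^ 2 := by
        gcongr
        linarith

theorem summable_two_mul_add_one_mul_geometric (hρ : ‖ρ‖ < 1) :
    Summable fun k : ℕ => (2 * k + 1) * ρ ^ k := by
  have hlin := (summable_pow_mul_geometric_of_norm_lt_one 1 hρ).mul_left 2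
  have hgeom := summable_geometric_of_norm_lt_one hρ
  exact (hlin.add hgeom).congr fun k => by ring

theorem summable_sinrDensityTerm (hρ0 : 0 ≤ ρ) (hρ1 : ρ < 1) (hb : 0 < b) {x : ℝ}
    (hx : 0 ≤ x) :
    Summable fun k => sinrDensityTerm ρ b k x := by
  refine .of_nonneg_of_le (fun k => sinrDensityTerm_nonneg hρ0 hb.le k hx)
    (fun k => sinrDensityTerm_le hρ0 hb k hx) ?_
  exact (summable_two_mul_add_one_mul_geometric (by rwa [Real.norm_of_nonneg hρ0])).div_const _

theorem hasSum_integral_sinrDensityTerm (hρ0 : 0 ≤ ρ) (hρ1 : ρ < 1) (hb : 0 < b) {z : ℝ}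
    (hz : 0 ≤ z) :
    HasSum (fun k => ∫ x in (0 : ℝ)..z, sinrDensityTerm ρ b k x)
      (∫ x in (0 : ℝ)..z, ∑' k, sinrDensityTerm ρ b k x) := by
  have hIoc : ∀ x ∈ Set.uIoc 0 z, 0 ≤ x := fun x hx => by
    rw [Set.uIoc_of_le hz] at hx
    exact hx.1.le
  refine intervalIntegral.hasSum_integral_of_dominated_convergence
    (fun k _ => (2 * k + 1) * ρ ^ k / b ^ 2) (fun k => ?_) (fun k => ?_) ?_
    intervalIntegrable_const ?_
  · exact Measurable.aestronglyMeasurable (by unfold sinrDensityTerm; fun_prop)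
  · refine ae_of_all _ fun x hx => ?_
    rw [Real.norm_of_nonneg (sinrDensityTerm_nonneg hρ0 hb.le k (hIoc x hx))]
    exact sinrDensityTerm_le hρ0 hb k (hIoc x hx)
  · exact ae_of_all _ fun _ _ =>
      (summable_two_mul_add_one_mul_geometric (by rwa [Real.norm_of_nonneg hρ0])).div_const _
  · exact ae_of_all _ fun x hx => (summable_sinrDensityTerm hρ0 hρ1 hb (hIoc x hx)).hasSum

theorem integral_sinrDensityTerm {z : ℝ} (hb : -b ∉ Set.uIcc 0 z) (k : ℕ) :
    ∫ x in (0 : ℝ)..z, sinrDensityTerm ρ b k x =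
      (Nat.factorial (2 * k + 1) : ℝ) / (Nat.factorial k : ℝ) ^ 2 * (ρ * b) ^ k *
        ∑ i ∈ range (k + 1), (k.choose i : ℝ) * (-b) ^ (k - i) / ((i : ℝ) - 2 * k - 1) *
          ((z + b) ^ ((i : ℤ) - 2 * k - 1) - b ^ ((i : ℤ) - 2 * k - 1)) := by
  simp only [sinrDensityTerm, mul_div_assoc, intervalIntegral.integral_const_mul,
    integral_pow_div_add_pow hb]

end DensityTerm

/-- Termwise integration of the asymptotic SINR density (Theorem 2):
for `b > 0`, `0 ≤ ρ < 1` and `z ≥ 0`,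
`∫₀^z (1−ρ) b ∑ₖ ((2k+1)!/(k!)²)(ρb)ᵏ xᵏ/(x+b)^{2k+2} dx
  = (1−ρ) b ∑ₖ ((2k+1)!/(k!)²)(ρb)ᵏ ∑ᵢ C(k,i)(−b)^{k−i}/(i−2k−1)
      ((z+b)^{i−2k−1} − b^{i−2k−1})`,
with the series on both sides convergent. -/
theorem cdf_series_integral (b ρ : ℝ) (hb : 0 < b) (hρ0 : 0 ≤ ρ) (hρ1 : ρ < 1)
    (z : ℝ) (hz : 0 ≤ z) :
    (∀ x : ℝ, 0 ≤ x → Summable fun k : ℕ =>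
        (Nat.factorial (2 * k + 1) : ℝ) / (Nat.factorial k : ℝ) ^ 2 *
          (ρ * b) ^ k * x ^ k / (x + b) ^ (2 * k + 2)) ∧
    Summable (fun k : ℕ =>
        (Nat.factorial (2 * k + 1) : ℝ) / (Nat.factorial k : ℝ) ^ 2 * (ρ * b) ^ k *
          ∑ i ∈ Finset.range (k + 1),
            (k.choose i : ℝ) * (-b) ^ (k - i) / ((i : ℝ) - 2 * k - 1) *
              ((z + b) ^ ((i : ℤ) - 2 * k - 1) - b ^ ((i : ℤ) - 2 * k - 1))) ∧
    (∫ x in (0:ℝ)..z, (1 - ρ) * b *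
        ∑' k : ℕ, (Nat.factorial (2 * k + 1) : ℝ) / (Nat.factorial k : ℝ) ^ 2 *
          (ρ * b) ^ k * x ^ k / (x + b) ^ (2 * k + 2)) =
      (1 - ρ) * b *
        ∑' k : ℕ, (Nat.factorial (2 * k + 1) : ℝ) / (Nat.factorial k : ℝ) ^ 2 *
          (ρ * b) ^ k *
          ∑ i ∈ Finset.range (k + 1),
            (k.choose i : ℝ) * (-b) ^ (k - i) / ((i : ℝ) - 2 * k - 1) *
              ((z + b) ^ ((i : ℤ) - 2 * k - 1) - b ^ ((i : ℤ) - 2 * k - 1)) := by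
  have hb' : -b ∉ Set.uIcc 0 z := fun h => by
    rw [Set.uIcc_of_le hz] at h
    linarith [h.1]
  have hsum := hasSum_integral_sinrDensityTerm hρ0 hρ1 hb hz
  simp_rw [integral_sinrDensityTerm hb'] at hsum
  refine ⟨fun x hx => summable_sinrDensityTerm hρ0 hρ1 hb hx, hsum.summable, ?_⟩
  rw [intervalIntegral.integral_const_mul, hsum.tsum_eq]
  rfl
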